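/- The matrix M is invertible, and the entries of its first and last rows of M⁻¹ are given explicitly by: (M⁻¹)_{0,l} = −(1/2)·∏_{i=1}^{l} c_i and (M⁻¹)_{m,l} = −(1/2)·∏_{i=l+1}^{m} c_i for every l = 0,1,…,m (empty products equal 1). In particular (M⁻¹)_{0,m} = (M⁻¹)_{m,0} = −(1/2)·∏_{i=1}^m c_i. -/

import Mathlib

open Finset

namespace Paper

/-- The tridiagonal matrix `M = J⁻¹|_𝔏` (index `j : Fin m` corresponds to `c_{j+1}`). -/
noncomputable def triM (m : ℕ) (hm : 0 < m) (c : Fin m → ℝ) :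
    Matrix (Fin (m + 1)) (Fin (m + 1)) ℝ :=
  Matrix.of fun i j =>
    if i = j then
      (if _h0 : i.1 = 0 then -2 / (1 - c ⟨0, hm⟩ ^ 2)
       else
        -2 / (1 - c ⟨i.1 - 1, by have := i.isLt; omega⟩ ^ 2) +
          (if hM : i.1 < m then -2 * c ⟨i.1, hM⟩ ^ 2 / (1 - c ⟨i.1, hM⟩ ^ 2) else 0))
    else if h : j.1 = i.1 + 1 then
      2 * c ⟨i.1, by have := j.isLt; omega⟩ / (1 - c ⟨i.1, by have := j.isLt; omega⟩ ^ 2)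
    else if h' : i.1 = j.1 + 1 then
      2 * c ⟨j.1, by have := i.isLt; omega⟩ / (1 - c ⟨j.1, by have := i.isLt; omega⟩ ^ 2)
    else 0

noncomputable def cpr (m : ℕ) (c : Fin m → ℝ) (i : ℕ) : ℝ :=
  if h : i < m then c ⟨i, h⟩ else 1

noncomputable def P (m : ℕ) (c : Fin m → ℝ) (a b : ℕ) : ℝ :=
  ∏ i ∈ Finset.Ico a b, cpr m c i

noncomputable def Mnat (m : ℕ) (c : Fin m → ℝ) (i j : ℕ) : ℝ :=
  if i = j then
    (if i = 0 then -2 / (1 - cpr m c 0 ^ 2)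
     else -2 / (1 - cpr m c (i - 1) ^ 2) +
       (if i < m then -2 * cpr m c i ^ 2 / (1 - cpr m c i ^ 2) else 0))
  else if j = i + 1 then 2 * cpr m c i / (1 - cpr m c i ^ 2)
  else if i = j + 1 then 2 * cpr m c j / (1 - cpr m c j ^ 2)
  else 0

noncomputable def Bnat (m : ℕ) (c : Fin m → ℝ) (i j : ℕ) : ℝ :=
  -(1 / 2) * P m c (min i j) (max i j)

noncomputable def triB (m : ℕ) (c : Fin m → ℝ) :
    Matrix (Fin (m + 1)) (Fin (m + 1)) ℝ :=
  Matrix.of fun i j => Bnat m c i.1 j.1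

lemma triM_eq (m : ℕ) (hm : 0 < m) (c : Fin m → ℝ) (i j : Fin (m + 1)) :
    triM m hm c i j = Mnat m c i.1 j.1 := by
  have hcc : ∀ (x : ℕ) (h : x < m), cpr m c x = c ⟨x, h⟩ := fun x h => dif_pos h
  simp only [triM, Mnat, Matrix.of_apply]
  by_cases hij : i = j
  · subst hij
    rw [if_pos rfl, if_pos rfl]
    by_cases h0 : i.1 = 0
    · rw [dif_pos h0, if_pos h0, hcc 0 hm]
    · rw [dif_neg h0, if_neg h0, hcc (i.1-1) (by have := i.isLt; omega)]
      congr 1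
      by_cases hM : i.1 < m
      · rw [dif_pos hM, if_pos hM, hcc i.1 hM]
      · rw [dif_neg hM, if_neg hM]
  · have hij' : i.1 ≠ j.1 := fun h => hij (Fin.ext h)
    rw [if_neg hij, if_neg hij']
    by_cases h1 : j.1 = i.1 + 1
    · rw [dif_pos h1, if_pos h1, hcc i.1 (by have := j.isLt; omega)]
    · rw [dif_neg h1, if_neg h1]
      by_cases h2 : i.1 = j.1 + 1
      · rw [dif_pos h2, if_pos h2, hcc j.1 (by have := i.isLt; omega)]
      · rw [dif_neg h2, if_neg h2]

lemma P_self (m : ℕ) (c : Fin m → ℝ) (a : ℕ) : P m c a a = 1 := by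
  simp [P]

lemma P_succ_top (m : ℕ) (c : Fin m → ℝ) {a b : ℕ} (h : a ≤ b) :
    P m c a (b + 1) = P m c a b * cpr m c b := by
  simp [P, Finset.prod_Ico_succ_top h]

lemma P_succ_bot (m : ℕ) (c : Fin m → ℝ) {a b : ℕ} (h : a < b) :
    P m c a b = cpr m c a * P m c (a + 1) b := by
  simp [P, Finset.prod_eq_prod_Ico_succ_bot h]

-- B relations
lemma B_right (m : ℕ) (c : Fin m → ℝ) {i j : ℕ} (h : j ≤ i) :
    Bnat m c (i + 1) j = cpr m c i * Bnat m c i j := by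
  simp only [Bnat]
  rw [min_eq_right h, min_eq_right (by omega), max_eq_left h, max_eq_left (by omega),
    P_succ_top m c h]
  ring

lemma B_left (m : ℕ) (c : Fin m → ℝ) {i j : ℕ} (h : i < j) :
    Bnat m c i j = cpr m c i * Bnat m c (i + 1) j := by
  simp only [Bnat]
  rw [min_eq_left (by omega), max_eq_right (by omega), min_eq_left (by omega),
    max_eq_right (by omega), P_succ_bot m c h]
  ring

lemma B_diag (m : ℕ) (c : Fin m → ℝ) (i : ℕ) : Bnat m c i i = -(1/2) := by
  simp [Bnat, P_self]




lemma Mnat_zero (m : ℕ) (c : Fin m → ℝ) {i k : ℕ} (h : ¬(k + 1 = i ∨ k = i ∨ k = i + 1)) :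
    Mnat m c i k = 0 := by
  simp only [Mnat]
  rw [if_neg (by omega), if_neg (by omega), if_neg (by omega)]

lemma entry (m : ℕ) (hm : 0 < m) (c : Fin m → ℝ)
    (hd : ∀ k, k < m → 1 - cpr m c k ^ 2 ≠ 0)
    (i j : ℕ) (hi : i ≤ m) (hj : j ≤ m) :
    ∑ k ∈ Finset.range (m + 1), Mnat m c i k * Bnat m c k j = if i = j then 1 else 0 := by
  by_cases hi0 : i = 0
  · subst hi0
    have hsub : ({0, 1} : Finset ℕ) ⊆ Finset.range (m + 1) := by
      intro x hx; simp only [Finset.mem_insert, Finset.mem_singleton] at hx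
      simp only [Finset.mem_range]; omega
    rw [← Finset.sum_subset hsub (fun x _ hx => by
      rw [Mnat_zero m c (by simp only [Finset.mem_insert, Finset.mem_singleton] at hx; omega),
        zero_mul])]
    rw [Finset.sum_pair (by norm_num : (0 : ℕ) ≠ 1)]
    have h00 : Mnat m c 0 0 = -2 / (1 - cpr m c 0 ^ 2) := by
      simp only [Mnat]; split_ifs <;>
        first
          | rfl
          | (exfalso; omega)
          | (exact ‹False›.elim)
          | (exact absurd trivial ‹¬True›)
          | norm_num
    have h01 : Mnat m c 0 1 = 2 * cpr m c 0 / (1 - cpr m c 0 ^ 2) := by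
      simp only [Mnat]; split_ifs <;>
        first
          | rfl
          | (exfalso; omega)
          | (exact ‹False›.elim)
          | (exact absurd trivial ‹¬True›)
          | norm_num
    have hd0 := hd 0 hm
    by_cases hj0 : j = 0
    · subst hj0
      rw [if_pos rfl, h00, h01]
      have hb : Bnat m c 1 0 = cpr m c 0 * Bnat m c 0 0 := B_right m c (le_refl 0)
      rw [hb, B_diag]
      field_simp
      ring
    · rw [if_neg (by omega : ¬(0 : ℕ) = j), h00, h01]
      have hb : Bnat m c 0 j = cpr m c 0 * Bnat m c 1 j := B_left m c (by omega)
      rw [hb]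
      field_simp
      ring
  · by_cases him : i = m
    · obtain ⟨a, rfl⟩ : ∃ a, m = a + 1 := ⟨m - 1, by omega⟩
      subst him
      have hsub : ({a, a + 1} : Finset ℕ) ⊆ Finset.range (a + 1 + 1) := by
        intro x hx; simp only [Finset.mem_insert, Finset.mem_singleton] at hx
        simp only [Finset.mem_range]; omega
      rw [← Finset.sum_subset hsub (fun x hxr hx => by
        rw [Mnat_zero (a+1) c (by
          simp only [Finset.mem_insert, Finset.mem_singleton] at hx
          simp only [Finset.mem_range] at hxr
          omega), zero_mul])]
      rw [Finset.sum_pair (by omega : a ≠ a + 1)]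
      have hma : Mnat (a+1) c (a+1) a = 2 * cpr (a+1) c a / (1 - cpr (a+1) c a ^ 2) := by
        simp only [Mnat]; split_ifs <;>
        first
          | rfl
          | (exfalso; omega)
          | (exact ‹False›.elim)
          | (exact absurd trivial ‹¬True›)
          | norm_num
      have hmm : Mnat (a+1) c (a+1) (a+1) = -2 / (1 - cpr (a+1) c a ^ 2) := by
        simp only [Mnat]; split_ifs <;>
        first
          | rfl
          | (exfalso; omega)
          | (exact ‹False›.elim)
          | (exact absurd trivial ‹¬True›)
          | norm_num
      have hda := hd a (by omega)
      by_cases hjm : j = a + 1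
      · subst hjm
        rw [if_pos rfl, hma, hmm]
        have hb : Bnat (a+1) c a (a+1) = cpr (a+1) c a * Bnat (a+1) c (a+1) (a+1) :=
          B_left (a+1) c (by omega)
        rw [hb]
        simp only [B_diag]
        field_simp
        ring
      · rw [if_neg (by omega), hma, hmm]
        have hja : j ≤ a := by omega
        have hb : Bnat (a+1) c (a+1) j = cpr (a+1) c a * Bnat (a+1) c a j := B_right (a+1) c hja
        rw [hb]
        field_simp
        ring
    · obtain ⟨a, rfl⟩ : ∃ b, i = b + 1 := ⟨i - 1, by omega⟩
      have ham : a + 1 < m := by omega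
      have hsub : ({a, a + 1, a + 2} : Finset ℕ) ⊆ Finset.range (m + 1) := by
        intro x hx
        simp only [Finset.mem_insert, Finset.mem_singleton] at hx
        simp only [Finset.mem_range]; omega
      rw [← Finset.sum_subset hsub (fun x _ hx => by
        rw [Mnat_zero m c (by
          simp only [Finset.mem_insert, Finset.mem_singleton] at hx; omega), zero_mul])]
      rw [show ({a, a + 1, a + 2} : Finset ℕ) = insert a {a + 1, a + 2} from rfl,
        Finset.sum_insert (by simp only [Finset.mem_insert, Finset.mem_singleton]; omega),
        Finset.sum_pair (by omega : a + 1 ≠ a + 2)]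
      have h1 : Mnat m c (a+1) a = 2 * cpr m c a / (1 - cpr m c a ^ 2) := by
        simp only [Mnat]; split_ifs <;>
        first
          | rfl
          | (exfalso; omega)
          | (exact ‹False›.elim)
          | (exact absurd trivial ‹¬True›)
          | norm_num
      have h2 : Mnat m c (a+1) (a+1) =
          -2 / (1 - cpr m c a ^ 2) + -2 * cpr m c (a+1) ^ 2 / (1 - cpr m c (a+1) ^ 2) := by
        simp only [Mnat]; split_ifs <;>
        first
          | rfl
          | (exfalso; omega)
          | (exact ‹False›.elim)
          | (exact absurd trivial ‹¬True›)
          | norm_num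
      have h3 : Mnat m c (a+1) (a+2) = 2 * cpr m c (a+1) / (1 - cpr m c (a+1) ^ 2) := by
        simp only [Mnat]; split_ifs <;>
        first
          | rfl
          | (exfalso; omega)
          | (exact ‹False›.elim)
          | (exact absurd trivial ‹¬True›)
          | norm_num
      have hda := hd a (by omega)
      have hda1 := hd (a+1) ham
      rcases lt_trichotomy j (a + 1) with hlt | heq | hgt
      · rw [if_neg (by omega), h1, h2, h3]
        have hja : j ≤ a := by omega
        have hb1 : Bnat m c (a+1) j = cpr m c a * Bnat m c a j := B_right m c hja
        have hb2 : Bnat m c (a+2) j = cpr m c (a+1) * Bnat m c (a+1) j := B_right m c (by omega)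
        rw [hb2, hb1]
        field_simp
        ring
      · subst heq
        rw [if_pos rfl, h1, h2, h3]
        have hb1 : Bnat m c a (a+1) = cpr m c a * Bnat m c (a+1) (a+1) := B_left m c (by omega)
        have hb2 : Bnat m c (a+2) (a+1) = cpr m c (a+1) * Bnat m c (a+1) (a+1) :=
          B_right m c (by omega)
        rw [hb1, hb2]
        simp only [B_diag]
        field_simp
        ring
      · rw [if_neg (by omega), h1, h2, h3]
        have hb1 : Bnat m c (a+1) j = cpr m c (a+1) * Bnat m c (a+2) j := B_left m c hgt
        have hb0 : Bnat m c a j = cpr m c a * Bnat m c (a+1) j := B_left m c (by omega)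
        rw [hb0, hb1]
        field_simp
        ring



lemma mulBM (m : ℕ) (hm : 0 < m) (c : Fin m → ℝ)
    (hc : ∀ j, c j ∈ Set.Ioo (0 : ℝ) 1) :
    triM m hm c * triB m c = 1 := by
  have hd : ∀ k, k < m → 1 - cpr m c k ^ 2 ≠ 0 := by
    intro k hk
    have h := hc ⟨k, hk⟩
    have h1 : cpr m c k = c ⟨k, hk⟩ := dif_pos hk
    rw [h1]
    nlinarith [h.1, h.2]
  ext i j
  rw [Matrix.mul_apply, Matrix.one_apply]
  have hsum : ∑ k : Fin (m + 1), triM m hm c i k * triB m c k j =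
      ∑ k ∈ Finset.range (m + 1), Mnat m c i.1 k * Bnat m c k j.1 := by
    rw [← Fin.sum_univ_eq_sum_range (fun k => Mnat m c i.1 k * Bnat m c k j.1) (m + 1)]
    exact Finset.sum_congr rfl fun k _ => by rw [triM_eq]; rfl
  rw [hsum, entry m hm c hd i.1 j.1 (by omega) (by omega)]
  simp [Fin.ext_iff]

lemma prodFilter (m : ℕ) (c : Fin m → ℝ) (a b : ℕ) (hb : b ≤ m) :
    ∏ i ∈ Finset.univ.filter (fun i : Fin m => a ≤ i.1 ∧ i.1 < b), c i = P m c a b := by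
  have key : ∀ i : Fin m, c i = cpr m c i.1 := fun i => by rw [cpr, dif_pos i.isLt]
  calc ∏ i ∈ Finset.univ.filter (fun i : Fin m => a ≤ i.1 ∧ i.1 < b), c i
      = ∏ i : Fin m, (if a ≤ i.1 ∧ i.1 < b then cpr m c i.1 else 1) := by
        rw [Finset.prod_filter]
        exact Finset.prod_congr rfl fun i _ => by split_ifs <;> simp [key i]
    _ = ∏ n ∈ Finset.range m, (if a ≤ n ∧ n < b then cpr m c n else 1) :=
        Fin.prod_univ_eq_prod_range (fun n => if a ≤ n ∧ n < b then cpr m c n else 1) m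
    _ = ∏ n ∈ (Finset.range m).filter (fun n => a ≤ n ∧ n < b), cpr m c n :=
        (Finset.prod_filter _ _).symm
    _ = P m c a b := by
        unfold P
        congr 1
        ext n
        simp only [Finset.mem_filter, Finset.mem_range, Finset.mem_Ico]
        omega




/-- `M` is invertible and the first and last rows of `M⁻¹` are explicit. -/
theorem triM_inverse_rows (m : ℕ) (hm : 0 < m) (c : Fin m → ℝ)
    (hc : ∀ j, c j ∈ Set.Ioo (0 : ℝ) 1) :
    IsUnit (triM m hm c) ∧
    (∀ l : Fin (m + 1),
      (triM m hm c)⁻¹ 0 l =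
        -(1 / 2) * ∏ i ∈ Finset.univ.filter (fun i : Fin m => i.1 < l.1), c i) ∧
    (∀ l : Fin (m + 1),
      (triM m hm c)⁻¹ (Fin.last m) l =
        -(1 / 2) * ∏ i ∈ Finset.univ.filter (fun i : Fin m => l.1 ≤ i.1), c i) := by

  have h1 := mulBM m hm c hc
  have hinv : (triM m hm c)⁻¹ = triB m c := Matrix.inv_eq_right_inv h1
  refine ⟨(Matrix.isUnit_iff_isUnit_det _).mpr (Matrix.isUnit_det_of_right_inverse h1), fun l => ?_, fun l => ?_⟩
  · rw [hinv]
    have hB : triB m c 0 l = -(1/2) * P m c 0 l.1 := by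
      show Bnat m c (0 : Fin (m+1)).1 l.1 = _
      unfold Bnat
      rw [show ((0 : Fin (m+1)).1) = 0 from rfl, min_eq_left (Nat.zero_le _),
        max_eq_right (Nat.zero_le _)]
    rw [hB, ← prodFilter m c 0 l.1 (by omega)]
    congr 1
    apply Finset.prod_congr _ (fun _ _ => rfl)
    ext i
    simp
  · rw [hinv]
    have hl : l.1 ≤ m := by omega
    have hB : triB m c (Fin.last m) l = -(1/2) * P m c l.1 m := by
      show Bnat m c (Fin.last m).1 l.1 = _
      unfold Bnat
      rw [show ((Fin.last m).1) = m from rfl, min_eq_right hl, max_eq_left hl]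
    rw [hB, ← prodFilter m c l.1 m le_rfl]
    congr 1
    apply Finset.prod_congr _ (fun _ _ => rfl)
    ext i
    simp only [Finset.mem_filter, Finset.mem_univ, true_and]
    have := i.isLt
    omega


end Paper
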